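/- arXiv:1611.04625 — 11 statements merged into one kernel-verified Lean document; each statement's English description precedes it below -/
import Mathlib

section
/- For every positive integer n, the sum over all pairs of positive integers (i,j) with i + j = n + 1 of (1/(i·j)) · C(2i+j-2, j-1) · C(2j+i-2, i-1) equals (2/((n+1)(2n+1))) · C(3n, n). -/
/-!
Both sides satisfy the first-order recurrence
`2 (n + 2) (2n + 3) a (n + 1) = 3 (3n + 1) (3n + 2) a n` for `n ≥ 1`, and both equal `1` at
`n = 1`. For the closed form this is a ratio of binomial coefficients. For the sum it is
creative telescoping: Zeilberger's algorithm produces a hypergeometric `G n i` with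
`2 (n + 2) (2n + 3) T (n + 1) i - 3 (3n + 1) (3n + 2) T n i = G n (i + 1) - G n i`
for the summand `T n i`, and `G n 1 = G n (n + 2) = 0`.
-/

open Finset

namespace Nat

variable {K : Type*}

theorem cast_choose_succ_right_mul [CommRing K] (n k : ℕ) :
    (n.choose (k + 1) : K) * (k + 1) = n.choose k * ((n : K) - k) := by
  rcases le_or_gt k n with h | h
  · have := congrArg (Nat.cast : ℕ → K) (choose_succ_right_eq n k)
    push_cast [h] at this
    exact this
  · simp [choose_eq_zero_of_lt h, choose_eq_zero_of_lt (h.trans (lt_add_one k))]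

theorem cast_choose_succ_left_mul [CommRing K] (n k : ℕ) :
    ((n + 1).choose k : K) * ((n : K) + 1 - k) = (n + 1) * n.choose k := by
  rcases le_or_gt k (n + 1) with h | h
  · have := congrArg (Nat.cast : ℕ → K) (choose_mul_succ_eq n k)
    push_cast [h] at this
    rw [← this, mul_comm]
  · simp [choose_eq_zero_of_lt h, choose_eq_zero_of_lt ((lt_add_one n).trans h)]

theorem cast_choose_succ_succ [Field K] [CharZero K] (n k : ℕ) :
    ((n + 1).choose (k + 1) : K) = (n + 1) / (k + 1) * n.choose k := by
  rw [div_mul_eq_mul_div, eq_div_iff (cast_add_one_ne_zero k)]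
  exact_mod_cast (add_one_mul_choose_eq n k).symm

theorem cast_choose_succ_right [Field K] [CharZero K] (n k : ℕ) :
    (n.choose (k + 1) : K) = (n - k) / (k + 1) * n.choose k := by
  rw [div_mul_eq_mul_div, eq_div_iff (cast_add_one_ne_zero k), cast_choose_succ_right_mul,
    mul_comm]

theorem cast_choose_succ_left [Field K] [CharZero K] {n k : ℕ} (h : k ≤ n) :
    ((n + 1).choose k : K) = (n + 1) / (n + 1 - k) * n.choose k := by
  have : (n : K) + 1 - k ≠ 0 := sub_ne_zero.2 (by exact_mod_cast (by omega : n + 1 ≠ k))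
  rw [div_mul_eq_mul_div, eq_div_iff this, cast_choose_succ_left_mul]

end Nat

theorem eq_of_first_order_recurrence {M : Type*} [Mul M] [Zero M] [IsLeftCancelMulZero M]
    {a b x y : ℕ → M} {m : ℕ} (ha : ∀ n ≥ m, a n ≠ 0)
    (hx : ∀ n ≥ m, a n * x (n + 1) = b n * x n) (hy : ∀ n ≥ m, a n * y (n + 1) = b n * y n)
    (hm : x m = y m) : ∀ n ≥ m, x n = y n := by
  intro n hn
  induction n, hn using Nat.le_induction with
  | base => exact hm
  | succ n hn ih => exact mul_left_cancel₀ (ha n hn) (by rw [hx n hn, hy n hn, ih])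

namespace FightingFish

/-- The number of fighting fish with `i` left and `j` right lower free edges. It is `0` for
`j = 0`, since `1 / 0 = 0`. -/
def edgeCount (i j : ℕ) : ℚ :=
  1 / ((i : ℚ) * j) * (Nat.choose (2*i + j - 2) (j - 1) : ℚ) *
    (Nat.choose (2*j + i - 2) (i - 1) : ℚ)

def edgeSum (n : ℕ) : ℚ := ∑ i ∈ Icc 1 n, edgeCount i (n + 1 - i)

def totalCount (n : ℕ) : ℚ := 2 / (((n : ℚ) + 1) * (2 * n + 1)) * (Nat.choose (3 * n) n : ℚ)

def coeffNext (n : ℕ) : ℚ := 2 * (n + 2) * (2 * n + 3)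

def coeffCurr (n : ℕ) : ℚ := 3 * (3 * n + 1) * (3 * n + 2)

def certPoly (n i : ℚ) : ℚ :=
  23*n^3 - 35*n^2*i + 83*n^2 + 14*n*i^2 - 79*n*i + 96*n + 12*i^2 - 42*i + 36

/-- Zeilberger's certificate for `edgeCount i (n + 1 - i)` and the recurrence
`coeffNext n * a (n + 1) = coeffCurr n * a n`. -/
def cert (n i : ℕ) : ℚ :=
  -certPoly n i * (Nat.choose (n + i - 1) (n + 2 - i) : ℚ) *
    (Nat.choose (2*n + 1 - i) (i - 1) : ℚ) /
    (n * (n + 1) * (2 * n + 3 - 2 * i))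

theorem edgeCount_zero_right (i : ℕ) : edgeCount i 0 = 0 := by
  simp [edgeCount]

theorem edgeCount_succ_succ (l m : ℕ) :
    edgeCount (l + 1) (m + 1) =
      (2*l + m + 1).choose m * (l + 2*m + 1).choose l / ((l + 1) * (m + 1)) := by
  rw [edgeCount, show 2*(l+1) + (m+1) - 2 = 2*l + m + 1 by omega,
    show 2*(m+1) + (l+1) - 2 = l + 2*m + 1 by omega]
  push_cast
  ring

theorem edgeCount_succ_one (n : ℕ) : edgeCount (n + 1) 1 = 1 := by
  rw [edgeCount_succ_succ, Nat.choose_zero_right, Nat.choose_succ_self_right]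
  field_simp
  push_cast
  ring

theorem cert_one (n : ℕ) : cert n 1 = 0 := by
  rw [cert, Nat.add_sub_cancel, Nat.choose_eq_zero_of_lt (by omega : n < n + 2 - 1)]
  simp

theorem cert_add_two (n : ℕ) : cert n (n + 2) = 0 := by
  rw [cert, Nat.choose_eq_zero_of_lt (by omega : 2*n + 1 - (n + 2) < n + 2 - 1)]
  simp

theorem creative_telescoping_of_lt (l m : ℕ) :
    coeffNext (l + 1 + m) * edgeCount (l + 1) (m + 2) -
        coeffCurr (l + 1 + m) * edgeCount (l + 1) (m + 1) =
      cert (l + 1 + m) (l + 2) - cert (l + 1 + m) (l + 1) := by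
  set A : ℚ := ↑((2*l + m + 1).choose m)
  set B : ℚ := ↑((l + 2*m + 1).choose l)
  have hT : edgeCount (l + 1) (m + 2) =
      (2*l + m + 2).choose (m + 1) * (l + 2*m + 3).choose l / ((l + 1) * (m + 2)) := by
    rw [edgeCount_succ_succ]; push_cast; ring_nf
  have hG₁ : cert (l + 1 + m) (l + 1) = -certPoly (l + 1 + m) (l + 1) *
      (2*l + m + 1).choose (m + 2) * (l + 2*m + 2).choose l /
        ((l + 1 + m) * (l + 2 + m) * (2*m + 3)) := by
    rw [cert, show l + 1 + m + (l + 1) - 1 = 2*l + m + 1 by omega,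
      show l + 1 + m + 2 - (l + 1) = m + 2 by omega,
      show 2*(l + 1 + m) + 1 - (l + 1) = l + 2*m + 2 by omega]
    push_cast; ring
  have hG₂ : cert (l + 1 + m) (l + 2) = -certPoly (l + 1 + m) (l + 2) *
      (2*l + m + 2).choose (m + 1) * (l + 2*m + 1).choose (l + 1) /
        ((l + 1 + m) * (l + 2 + m) * (2*m + 1)) := by
    rw [cert, show l + 1 + m + (l + 2) - 1 = 2*l + m + 2 by omega,
      show l + 1 + m + 2 - (l + 2) = m + 1 by omega,
      show 2*(l + 1 + m) + 1 - (l + 2) = l + 2*m + 1 by omega]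
    push_cast; ring
  have hA₁ : ((2*l + m + 2).choose (m + 1) : ℚ) = (2*l + m + 2) / (m + 1) * A := by
    rw [Nat.cast_choose_succ_succ]; push_cast; ring
  have hA₂ : ((2*l + m + 1).choose (m + 1) : ℚ) = (2*l + 1) / (m + 1) * A := by
    rw [Nat.cast_choose_succ_right]; push_cast; ring
  have hA₃ : ((2*l + m + 1).choose (m + 2) : ℚ) =
      2*l / (m + 2) * (2*l + m + 1).choose (m + 1) := by
    rw [Nat.cast_choose_succ_right]; push_cast; ring
  have hB₁ : ((l + 2*m + 2).choose l : ℚ) = (l + 2*m + 2) / (2*m + 2) * B := by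
    rw [Nat.cast_choose_succ_left (by omega)]; push_cast; ring
  have hB₂ : ((l + 2*m + 3).choose l : ℚ) =
      (l + 2*m + 3) / (2*m + 3) * (l + 2*m + 2).choose l := by
    rw [Nat.cast_choose_succ_left (by omega)]; push_cast; ring
  have hB₃ : ((l + 2*m + 1).choose (l + 1) : ℚ) = (2*m + 1) / (l + 1) * B := by
    rw [Nat.cast_choose_succ_right]; push_cast; ring
  rw [hT, edgeCount_succ_succ, hG₁, hG₂, hA₃, hA₁, hA₂, hB₂, hB₁, hB₃, coeffNext,
    coeffCurr, certPoly, certPoly]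
  field_simp
  push_cast
  ring

theorem creative_telescoping_top {n : ℕ} (hn : n ≠ 0) :
    coeffNext n * edgeCount (n + 1) 1 - coeffCurr n * edgeCount (n + 1) 0 =
      cert n (n + 2) - cert n (n + 1) := by
  rw [edgeCount_succ_one, edgeCount_zero_right, cert_add_two, cert,
    show n + (n + 1) - 1 = 2*n by omega, show n + 2 - (n + 1) = 1 by omega,
    show 2*n + 1 - (n + 1) = n by omega, Nat.add_sub_cancel, Nat.choose_one_right,
    Nat.choose_self, coeffNext, certPoly]
  have : (n : ℚ) ≠ 0 := by exact_mod_cast hn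
  push_cast
  rw [show 2 * (n : ℚ) + 3 - 2 * (n + 1) = 1 by ring]
  field_simp
  ring

theorem creative_telescoping {n i : ℕ} (hn : n ≠ 0) (hi : i ∈ Icc 1 (n + 1)) :
    coeffNext n * edgeCount i (n + 2 - i) - coeffCurr n * edgeCount i (n + 1 - i) =
      cert n (i + 1) - cert n i := by
  obtain ⟨l, rfl⟩ : ∃ l, i = l + 1 := ⟨i - 1, by grind⟩
  obtain hl | rfl : l < n ∨ l = n := by grind
  · obtain ⟨m, rfl⟩ : ∃ m, n = l + 1 + m := ⟨n - (l + 1), by omega⟩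
    rw [show l + 1 + m + 2 - (l + 1) = m + 2 by omega,
      show l + 1 + m + 1 - (l + 1) = m + 1 by omega]
    exact creative_telescoping_of_lt l m
  · rw [show l + 2 - (l + 1) = 1 by omega, Nat.sub_self]
    exact creative_telescoping_top hn

theorem edgeSum_recurrence {n : ℕ} (hn : n ≠ 0) :
    coeffNext n * edgeSum (n + 1) = coeffCurr n * edgeSum n := by
  have hext : edgeSum n = ∑ i ∈ Icc 1 (n + 1), edgeCount i (n + 1 - i) := by
    rw [sum_Icc_succ_top (by omega), Nat.sub_self, edgeCount_zero_right, add_zero, edgeSum]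
  rw [← sub_eq_zero, hext, edgeSum, mul_sum, mul_sum, ← sum_sub_distrib,
    sum_congr rfl fun i hi => creative_telescoping hn hi, sum_Icc_sub (by omega), cert_add_two,
    cert_one, sub_zero]

theorem totalCount_recurrence (n : ℕ) :
    coeffNext n * totalCount (n + 1) = coeffCurr n * totalCount n := by
  have h₁ : ((3*n + 1).choose n : ℚ) = (3*n + 1) / (2*n + 1) * (3*n).choose n := by
    rw [Nat.cast_choose_succ_left (by omega)]; push_cast; ring
  have h₂ : ((3*n + 2).choose n : ℚ) = (3*n + 2) / (2*n + 2) * (3*n + 1).choose n := by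
    rw [Nat.cast_choose_succ_left (by omega)]; push_cast; ring
  have h₃ : ((3*n + 3).choose (n + 1) : ℚ) = 3 * (3*n + 2).choose n := by
    rw [Nat.cast_choose_succ_succ]; field_simp; push_cast; ring
  rw [totalCount, totalCount, show 3 * (n + 1) = 3*n + 3 by ring, h₃, h₂, h₁, coeffNext,
    coeffCurr]
  field_simp
  push_cast
  ring

theorem edgeSum_one : edgeSum 1 = totalCount 1 := by
  norm_num [edgeSum, totalCount, edgeCount]

end FightingFish

/-- Summing the number of fighting fish with `i` left and `j` right lower free edges over
all pairs of positive integers `(i, j)` with `i + j = n + 1` gives the total number of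
fighting fish of size `n + 1`. -/
theorem fighting_fish_total_count (n : ℕ) (hn : 1 ≤ n) :
    ∑ i ∈ Finset.Icc 1 n,
        (1 / ((i : ℚ) * ((n + 1 - i : ℕ) : ℚ))) *
          (Nat.choose (2*i + (n + 1 - i) - 2) ((n + 1 - i) - 1) : ℚ) *
          (Nat.choose (2*(n + 1 - i) + i - 2) (i - 1) : ℚ)
      = (2 / (((n : ℚ) + 1) * (2*(n : ℚ) + 1))) * (Nat.choose (3*n) n : ℚ) :=
  eq_of_first_order_recurrence (fun n _ => by unfold FightingFish.coeffNext; positivity)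
    (fun _ hn => FightingFish.edgeSum_recurrence (by omega))
    (fun n _ => FightingFish.totalCount_recurrence n) FightingFish.edgeSum_one n hn
end

section
/- Let X in ℚ[[t]] be the unique power series with zero constant term satisfying X = B·(1 + X + X^2), where B = t·T^2 and T = 1 + t·T^3 (T with constant term 1). Then T·(1 + X^2) = 1 + X + X^2 and (T - 1)·(1 + X^2) = X. -/
theorem ternary_tree_X_relations_general (T B Xs : PowerSeries ℚ)
    (hT : T = 1 + PowerSeries.X * T ^ 3)
    (hB : B = PowerSeries.X * T ^ 2)
    (hXs : Xs = B * (1 + Xs + Xs ^ 2)) :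
    T * (1 + Xs ^ 2) = 1 + Xs + Xs ^ 2 ∧ (T - 1) * (1 + Xs ^ 2) = Xs := by
  -- `T·X = t T³ (1 + X + X²) = (T - 1)(1 + X + X²)`
  have hTXs : T * Xs = (T - 1) * (1 + Xs + Xs ^ 2) := by
    linear_combination T * hXs + T * (1 + Xs + Xs ^ 2) * hB - (1 + Xs + Xs ^ 2) * hT
  have hT_mul : T * (1 + Xs ^ 2) = 1 + Xs + Xs ^ 2 := by linear_combination -hTXs
  exact ⟨hT_mul, by linear_combination hT_mul⟩

/-- With `T = 1 + tT^3` (constant term 1), `B = tT^2`, and `X` the unique series with zero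
constant term satisfying `X = B(1 + X + X^2)`, we have `T(1 + X^2) = 1 + X + X^2` and
`(T - 1)(1 + X^2) = X`. -/
theorem ternary_tree_X_relations (T B Xs : PowerSeries ℚ)
    (hT0 : PowerSeries.constantCoeff T = 1)
    (hT : T = 1 + PowerSeries.X * T ^ 3)
    (hB : B = PowerSeries.X * T ^ 2)
    (hXs0 : PowerSeries.constantCoeff Xs = 0)
    (hXs : Xs = B * (1 + Xs + Xs ^ 2)) :
    T * (1 + Xs ^ 2) = 1 + Xs + Xs ^ 2 ∧ (T - 1) * (1 + Xs ^ 2) = Xs :=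
  ternary_tree_X_relations_general T B Xs hT hB hXs
end

section
/- Let X and S be commuting indeterminates, and for each integer j ≥ -2 define the polynomial H_j = (1 - X^{j+1})·X·S - (1 + X)·(1 - X^{j+2}). Then for every integer j ≥ 0, (1 - X^{j+3})·H_{j-1} + (S - 1)·(1 - X^{j+1})·H_{j+1} = S·(1 - X^{j+2})·H_j. -/
/-- Polynomial identity in `ℤ[X, S]`: with `H_j = (1 - X^{j+1})·X·S - (1 + X)·(1 - X^{j+2})`
for `j ≥ -2` (here `H m` denotes `H_{m-1}`, so that indices are naturals), we have for every
`j ≥ 0`: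
`(1 - X^{j+3})·H_{j-1} + (S - 1)·(1 - X^{j+1})·H_{j+1} = S·(1 - X^{j+2})·H_j`. -/
theorem H_polynomial_identity (R : Type*) [CommRing R] (X S : R)
    (H : ℕ → R)
    (hH : ∀ m : ℕ, H m = (1 - X ^ m) * X * S - (1 + X) * (1 - X ^ (m + 1)))
    (j : ℕ) :
    (1 - X ^ (j + 3)) * H j + (S - 1) * (1 - X ^ (j + 1)) * H (j + 2)
      = S * (1 - X ^ (j + 2)) * H (j + 1) := by
  simp only [hH]
  ring
end

section
/- Let T, X ∈ ℚ[[t]] with T = 1 + tT^3 (constant term 1) and X = tT^2(1+X+X^2) (constant term 0), and define for j ≥ 0 the series T_j = T·(1 - X^{j+5})(1 - X^{j+2}) / ((1 - X^{j+4})(1 - X^{j+3})). Then with the convention T_{-1} = 1 and T_{-2} = 0, the family satisfies T_j = 1 + t·T_{j+1}·T_j·T_{j-1} for all j ≥ -1. -/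
/-!
With `Q = 1 + X + X²` and `S = 1 + X²`, the two functional equations give `T S = Q` and
`t T³ S = X`. For `j ≥ 0` we have `T_j = P(X^{j+2})` with
`P(y) = T (1 - X³y)(1 - y) / ((1 - X²y)(1 - Xy))`, and the product `P(X²z) P(Xz) P(z)`
telescopes to `T³ (1 - X⁵z)(1 - z) / ((1 - X³z)(1 - X²z))`. After multiplying by `S` the
recurrence becomes the polynomial identity
`Q (1 - X⁴z)(1 - Xz) = S (1 - X³z)(1 - X²z) + X (1 - X⁵z)(1 - z)`.
The case `j = 0`, where `T_{-1} = 1` is not `P(X)`, is a separate identity in `X` alone.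
Both are checked in the fraction field of `ℚ[[t]]`, where every `1 - X^k` is nonzero.
-/

section CommRing

variable {R : Type*} [CommRing R] {t T X : R}

theorem kuba_T_mul_one_add_sq (hT : T = 1 + t * T ^ 3) (hX : X = t * T ^ 2 * (1 + X + X ^ 2)) :
    T * (1 + X ^ 2) = 1 + X + X ^ 2 := by
  linear_combination (1 + X + X ^ 2) * hT - T * hX

theorem kuba_t_mul_T_pow_three_mul_one_add_sq (hT : T = 1 + t * T ^ 3)
    (hX : X = t * T ^ 2 * (1 + X + X ^ 2)) :
    t * T ^ 3 * (1 + X ^ 2) = X := by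
  linear_combination t * T ^ 2 * kuba_T_mul_one_add_sq hT hX - hX

end CommRing

section Field

variable {K : Type*} [Field K]

def kubaTerm (T X y : K) : K :=
  T * (1 - X ^ 3 * y) * (1 - y) / ((1 - X ^ 2 * y) * (1 - X * y))

variable {t T X : K}

theorem eq_kubaTerm_pow {a : K} (j : ℕ) (h3 : 1 - X ^ (j + 3) ≠ 0) (h4 : 1 - X ^ (j + 4) ≠ 0)
    (h : a * ((1 - X ^ (j + 4)) * (1 - X ^ (j + 3))) = T * (1 - X ^ (j + 5)) * (1 - X ^ (j + 2))) :
    a = kubaTerm T X (X ^ (j + 2)) := by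
  have hd : (1 - X ^ 2 * X ^ (j + 2)) * (1 - X * X ^ (j + 2)) =
      (1 - X ^ (j + 4)) * (1 - X ^ (j + 3)) := by ring
  rw [kubaTerm, eq_div_iff (hd ▸ mul_ne_zero h4 h3)]
  linear_combination h

theorem kubaTerm_recurrence (hT : T = 1 + t * T ^ 3) (hX : X = t * T ^ 2 * (1 + X + X ^ 2))
    (hS : 1 + X ^ 2 ≠ 0) {z : K} (h1 : 1 - X * z ≠ 0) (h2 : 1 - X ^ 2 * z ≠ 0)
    (h3 : 1 - X ^ 3 * z ≠ 0) (h4 : 1 - X ^ 4 * z ≠ 0) :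
    kubaTerm T X (X * z) =
      1 + t * kubaTerm T X (X ^ 2 * z) * kubaTerm T X (X * z) * kubaTerm T X z := by
  unfold kubaTerm
  field_simp
  refine mul_left_cancel₀ hS ?_
  linear_combination (1 - X ^ 4 * z) * (1 - X * z) * kuba_T_mul_one_add_sq hT hX
    - (1 - X ^ 5 * z) * (1 - z) * kuba_t_mul_T_pow_three_mul_one_add_sq hT hX

theorem kubaTerm_recurrence_X_sq (hT : T = 1 + t * T ^ 3)
    (hX : X = t * T ^ 2 * (1 + X + X ^ 2))
    (h3 : 1 - X ^ 3 ≠ 0) (h4 : 1 - X ^ 4 ≠ 0) (h5 : 1 - X ^ 5 ≠ 0) :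
    kubaTerm T X (X ^ 2) = 1 + t * kubaTerm T X (X ^ 3) * kubaTerm T X (X ^ 2) := by
  have hS : 1 + X ^ 2 ≠ 0 := fun h ↦ h4 (by linear_combination (1 - X ^ 2) * h)
  unfold kubaTerm
  field_simp
  refine mul_left_cancel₀ hS ?_
  linear_combination (1 - X ^ 5) * (1 - X ^ 2) * (1 - X ^ 4) * kuba_T_mul_one_add_sq hT hX
    + (1 + X ^ 2) * (1 - X) * (1 - X ^ 2) * (1 - X ^ 6) * hX

end Field

section PowerSeries

variable {R : Type*} [CommRing R]

theorem PowerSeries.algebraMap_fractionRing_ne_zero {f : PowerSeries R}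
    (hf : constantCoeff f ≠ 0) : algebraMap (PowerSeries R) (FractionRing (PowerSeries R)) f ≠ 0 :=
  (map_ne_zero_iff _ (IsFractionRing.injective _ _)).mpr fun h ↦ hf (by simp [h])

theorem PowerSeries.one_sub_algebraMap_pow_ne_zero [Nontrivial R] {x : PowerSeries R}
    (hx : constantCoeff x = 0) {n : ℕ} (hn : n ≠ 0) :
    1 - algebraMap (PowerSeries R) (FractionRing (PowerSeries R)) x ^ n ≠ 0 := by
  rw [← map_pow, ← map_one (algebraMap (PowerSeries R) (FractionRing (PowerSeries R))), ← map_sub]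
  exact algebraMap_fractionRing_ne_zero (by simp [hx, hn])

end PowerSeries

-- `TT k` stands for `T_{k-2}`.
theorem kuba_recurrence_general (T Xs : PowerSeries ℚ)
    (hT : T = 1 + PowerSeries.X * T ^ 3)
    (hXs0 : PowerSeries.constantCoeff Xs = 0)
    (hXs : Xs = PowerSeries.X * T ^ 2 * (1 + Xs + Xs ^ 2))
    (TT : ℕ → PowerSeries ℚ)
    (hTTm2 : TT 0 = 0)
    (hTTm1 : TT 1 = 1)
    (hTT : ∀ j : ℕ, TT (j + 2) * ((1 - Xs ^ (j + 4)) * (1 - Xs ^ (j + 3)))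
        = T * (1 - Xs ^ (j + 5)) * (1 - Xs ^ (j + 2))) :
    ∀ j : ℕ, TT (j + 1) = 1 + PowerSeries.X * TT (j + 2) * TT (j + 1) * TT j := by
  let φ := algebraMap (PowerSeries ℚ) (FractionRing (PowerSeries ℚ))
  have hφ : Function.Injective φ := IsFractionRing.injective _ _
  have one_sub_ne : ∀ (m : ℕ) {y}, y = φ Xs ^ (m + 1) → 1 - y ≠ 0 := by
    rintro m y rfl
    exact PowerSeries.one_sub_algebraMap_pow_ne_zero hXs0 m.succ_ne_zero
  have hS : 1 + φ Xs ^ 2 ≠ 0 := by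
    rw [← map_pow, ← map_one φ, ← map_add]
    exact PowerSeries.algebraMap_fractionRing_ne_zero (by simp [hXs0])
  have hTφ : φ T = 1 + φ PowerSeries.X * φ T ^ 3 := by simpa using congrArg φ hT
  have hXsφ : φ Xs = φ PowerSeries.X * φ T ^ 2 * (1 + φ Xs + φ Xs ^ 2) := by
    simpa using congrArg φ hXs
  have hTTφ : ∀ j, φ (TT (j + 2)) = kubaTerm (φ T) (φ Xs) (φ Xs ^ (j + 2)) := fun j ↦
    eq_kubaTerm_pow j (one_sub_ne (j + 2) rfl) (one_sub_ne (j + 3) rfl)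
      (by simpa using congrArg φ (hTT j))
  intro j
  apply hφ
  rcases j with _ | _ | n
  · simp [hTTm1, hTTm2]
  · simpa [hTTm1, hTTφ 0, hTTφ 1] using kubaTerm_recurrence_X_sq hTφ hXsφ (one_sub_ne 2 rfl)
      (one_sub_ne 3 rfl) (one_sub_ne 4 rfl)
  · simp only [map_add, map_mul, map_one]
    rw [hTTφ n, hTTφ (n + 1), hTTφ (n + 2),
      show φ Xs ^ (n + 1 + 2) = φ Xs * φ Xs ^ (n + 2) by ring,
      show φ Xs ^ (n + 2 + 2) = φ Xs ^ 2 * φ Xs ^ (n + 2) by ring]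
    exact kubaTerm_recurrence hTφ hXsφ hS (one_sub_ne (n + 2) (by ring))
      (one_sub_ne (n + 3) (by ring)) (one_sub_ne (n + 4) (by ring)) (one_sub_ne (n + 5) (by ring))

/-- Kuba's formula: with `T = 1 + tT^3` and `X = tT^2(1+X+X^2)` in `ℚ[[t]]`, the family
`T_j = T(1-X^{j+5})(1-X^{j+2})/((1-X^{j+4})(1-X^{j+3}))` for `j ≥ 0`, with conventions
`T_{-1} = 1` and `T_{-2} = 0`, satisfies `T_j = 1 + t·T_{j+1}·T_j·T_{j-1}` for all `j ≥ -1`.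
Here `TT k` denotes `T_{k-2}` (so indices are naturals), and the defining formula for
`T_j`, `j ≥ 0`, is stated multiplicatively (the denominators are invertible since `X` has
zero constant term). -/
theorem kuba_recurrence (T Xs : PowerSeries ℚ)
    (hT0 : PowerSeries.constantCoeff T = 1)
    (hT : T = 1 + PowerSeries.X * T ^ 3)
    (hXs0 : PowerSeries.constantCoeff Xs = 0)
    (hXs : Xs = PowerSeries.X * T ^ 2 * (1 + Xs + Xs ^ 2))
    (TT : ℕ → PowerSeries ℚ)
    (hTTm2 : TT 0 = 0)
    (hTTm1 : TT 1 = 1)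
    (hTT : ∀ j : ℕ, TT (j + 2) * ((1 - Xs ^ (j + 4)) * (1 - Xs ^ (j + 3)))
        = T * (1 - Xs ^ (j + 5)) * (1 - Xs ^ (j + 2))) :
    ∀ j : ℕ, TT (j + 1) = 1 + PowerSeries.X * TT (j + 2) * TT (j + 1) * TT j :=
  kuba_recurrence_general T Xs hT hXs0 hXs TT hTTm2 hTTm1 hTT
end

section
/- Let T, X ∈ ℚ[[t]] satisfy T = 1 + tT^3 and X = tT^2(1+X+X^2) with constant terms 1 and 0 respectively, let T(u) ∈ ℚ[[t,u]] with constant term 1 satisfy T(u) = 1 + t·u·T(u)^2·T, and define H_j(u) = (1 - X^{j+1})·X·T(u) - (1+X)(1 - X^{j+2}) for j ≥ -2, and T_j(u) = T(u)·(H_j(u)/H_{j-1}(u))·((1 - X^{j+2})/(1 - X^{j+3})) for j ≥ -1. Then T_{-1}(u) = 1 and for all j ≥ 0, T_j(u) = 1 + t·u·T_{j+1}(u)·T_j(u)·T_{j-1}, where T_{j-1} = T_{j-1}(1) is given by Kuba's formula T_k = T(1 - X^{k+5})(1 - X^{k+2})/((1 - X^{k+4})(1 - X^{k+3})). -/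
/-- The ring `ℚ[[t,u]]`, realized as `ℚ[[t]][[u]]`. -/
abbrev QTU : Type := PowerSeries (PowerSeries ℚ)

/-- The image of a series of `ℚ[[t]]` in `ℚ[[t,u]]`. -/
noncomputable def liftT (f : PowerSeries ℚ) : QTU := PowerSeries.C (R := PowerSeries ℚ) f

/-- The variable `t` in `ℚ[[t,u]]`. -/
noncomputable def tVar : QTU := liftT PowerSeries.X

/-- The variable `u` in `ℚ[[t,u]]`. -/
noncomputable def uVar : QTU := PowerSeries.X

/-!
Write `x = X`, `y = X^{j+1}`, `S = T(u)` and `h(y) = (x - y) S - (1 + x)(1 - y)`, so that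
`H_j(u) = h(xy)`. Clearing the denominators of `T_j(u)`, `T_{j+1}(u)` and `T_{j-1}`, and replacing
`tu T(u)^2 T` by `T(u) - 1`, the recurrence becomes the polynomial identity
`S h(xy)(1 - xy) - h(y)(1 - x²y) = (S - 1) h(x²y)(1 - y)`, which holds for arbitrary `x`.
All denominators are nonzero in `ℚ[[t,u]]` because their constant terms are `±1`.
-/

section Algebra

variable {R : Type*} [CommRing R]

def kubaH (S x y : R) : R := (x - y) * S - (1 + x) * (1 - y)

theorem kubaH_mul_sub_kubaH (S x y : R) :
    S * kubaH S x (x * y) * (1 - x * y) - kubaH S x y * (1 - x ^ 2 * y)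
      = (S - 1) * kubaH S x (x ^ 2 * y) * (1 - y) := by
  unfold kubaH; ring

theorem one_sub_pow_ne_zero_of_map {K : Type*} [Ring K] [Nontrivial K] {ε : R →+* K} {x : R}
    (hx : ε x = 0) {k : ℕ} (hk : k ≠ 0) : 1 - x ^ k ≠ 0 :=
  ne_zero_of_map (f := ε) (by simp [hx, hk])

theorem kubaH_pow_ne_zero_of_map {K : Type*} [Ring K] [Nontrivial K] {ε : R →+* K} {S x : R}
    (hS : ε S = 1) (hx : ε x = 0) {k : ℕ} (hk : k ≠ 0) : kubaH S x (x ^ k) ≠ 0 :=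
  ne_zero_of_map (f := ε) (by simp [kubaH, hS, hx, hk])

variable [IsDomain R]

theorem eq_one_of_kubaH {S x A : R} (hS : S ≠ 0) (hx : 1 - x ^ 2 ≠ 0)
    (hA : A * kubaH S x (x ^ 0) * (1 - x ^ 2) = S * kubaH S x (x ^ 1) * (1 - x ^ 1)) :
    A = 1 := by
  have hx1 : x - 1 ≠ 0 := fun h => hx (by linear_combination (-1 - x) * h)
  apply mul_right_cancel₀ (mul_ne_zero (mul_ne_zero hx1 hS) hx)
  unfold kubaH at hA
  linear_combination hA

theorem eq_one_add_mul_of_kubaH {S τ x c A B C : R} {n : ℕ}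
    (hS : S = 1 + c * S ^ 2 * τ)
    (hA : A * kubaH S x (x ^ n) * (1 - x ^ (n + 2))
        = S * kubaH S x (x ^ (n + 1)) * (1 - x ^ (n + 1)))
    (hB : B * kubaH S x (x ^ (n + 1)) * (1 - x ^ (n + 3))
        = S * kubaH S x (x ^ (n + 2)) * (1 - x ^ (n + 2)))
    (hC : C * ((1 - x ^ (n + 2)) * (1 - x ^ (n + 1))) = τ * (1 - x ^ (n + 3)) * (1 - x ^ n))
    (h₀ : kubaH S x (x ^ n) ≠ 0) (h₁ : kubaH S x (x ^ (n + 1)) ≠ 0)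
    (a₁ : 1 - x ^ (n + 1) ≠ 0) (a₂ : 1 - x ^ (n + 2) ≠ 0) (a₃ : 1 - x ^ (n + 3) ≠ 0) :
    A = 1 + c * B * A * C := by
  set y := x ^ n
  have e₁ : x ^ (n + 1) = x * y := by ring
  have e₂ : x ^ (n + 2) = x ^ 2 * y := by ring
  have e₃ : x ^ (n + 3) = x ^ 3 * y := by ring
  simp only [e₁, e₂, e₃] at hA hB hC h₁ a₁ a₂ a₃
  apply mul_right_cancel₀ (mul_ne_zero (mul_ne_zero (mul_ne_zero h₀ a₂) (mul_ne_zero h₁ a₃))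
    (mul_ne_zero a₂ a₁))
  linear_combination
    (1 - c * B * C) * kubaH S x (x * y) * (1 - x ^ 3 * y) * (1 - x ^ 2 * y) * (1 - x * y) * hA
    - c * C * S * kubaH S x (x * y) * (1 - x * y) * (1 - x ^ 2 * y) * (1 - x * y) * hB
    - c * S ^ 2 * kubaH S x (x * y) * kubaH S x (x ^ 2 * y) * (1 - x * y) * (1 - x ^ 2 * y) * hC
    + kubaH S x (x * y) * kubaH S x (x ^ 2 * y) * (1 - x * y) * (1 - x ^ 2 * y)
      * (1 - x ^ 3 * y) * (1 - y) * hS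
    + kubaH S x (x * y) * (1 - x * y) * (1 - x ^ 2 * y) * (1 - x ^ 3 * y)
      * kubaH_mul_sub_kubaH S x y

end Algebra

/-- Here `H k = H_{k-2}(u)`, `TTu k = T_{k-1}(u)` and `TK m = T_{m-1}`; the quotients defining
`T_j(u)` and `T_{j-1}` are stated multiplicatively. -/
theorem refined_kuba_general (T Xs : PowerSeries ℚ)
    (hXs0 : PowerSeries.constantCoeff (R := ℚ) Xs = 0)
    (Tu : QTU)
    (hTu0 : PowerSeries.constantCoeff (R := ℚ) (PowerSeries.constantCoeff (R := PowerSeries ℚ) Tu) = 1)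
    (hTu : Tu = 1 + tVar * uVar * Tu ^ 2 * liftT T)
    (H : ℕ → QTU)
    (hH : ∀ k : ℕ, H k = (liftT Xs - liftT (Xs ^ k)) * Tu - (1 + liftT Xs) * (1 - liftT (Xs ^ k)))
    (TTu : ℕ → QTU)
    (hTTu : ∀ k : ℕ, TTu k * H k * (1 - liftT (Xs ^ (k + 2)))
        = Tu * H (k + 1) * (1 - liftT (Xs ^ (k + 1))))
    (TK : ℕ → PowerSeries ℚ)
    (hTK : ∀ m : ℕ, TK m * ((1 - Xs ^ (m + 3)) * (1 - Xs ^ (m + 2)))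
        = T * (1 - Xs ^ (m + 4)) * (1 - Xs ^ (m + 1))) :
    TTu 0 = 1 ∧
      ∀ j : ℕ, TTu (j + 1) = 1 + tVar * uVar * TTu (j + 2) * TTu (j + 1) * liftT (TK j) := by
  set ε : QTU →+* ℚ := PowerSeries.constantCoeff.comp PowerSeries.constantCoeff
  have hεS : ε Tu = 1 := hTu0
  have hεx : ε (liftT Xs) = 0 := by simp [ε, liftT, hXs0]
  have hTTu' : ∀ k, TTu k * kubaH Tu (liftT Xs) (liftT Xs ^ k) * (1 - liftT Xs ^ (k + 2))
      = Tu * kubaH Tu (liftT Xs) (liftT Xs ^ (k + 1)) * (1 - liftT Xs ^ (k + 1)) := fun k => by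
    simpa only [hH, liftT, map_pow, kubaH] using hTTu k
  have hTK' : ∀ m, liftT (TK m) * ((1 - liftT Xs ^ (m + 3)) * (1 - liftT Xs ^ (m + 2)))
      = liftT T * (1 - liftT Xs ^ (m + 4)) * (1 - liftT Xs ^ (m + 1)) := fun m => by
    simpa only [liftT, map_mul, map_sub, map_one, map_pow] using congrArg liftT (hTK m)
  have hone_sub : ∀ {k}, k ≠ 0 → 1 - liftT Xs ^ k ≠ 0 := one_sub_pow_ne_zero_of_map hεx
  have hkubaH : ∀ {k}, k ≠ 0 → kubaH Tu (liftT Xs) (liftT Xs ^ k) ≠ 0 :=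
    kubaH_pow_ne_zero_of_map hεS hεx
  have hTu_ne : Tu ≠ 0 := ne_zero_of_map (f := ε) (by simp [hεS])
  refine ⟨eq_one_of_kubaH hTu_ne (hone_sub two_ne_zero) (hTTu' 0), fun j => ?_⟩
  exact eq_one_add_mul_of_kubaH hTu (hTTu' (j + 1)) (hTTu' (j + 2)) (hTK' j)
    (hkubaH (by omega)) (hkubaH (by omega))
    (hone_sub (by omega)) (hone_sub (by omega)) (hone_sub (by omega))

/-- The refined Kuba-type formula: with `T = 1 + tT^3`, `X = tT^2(1+X+X^2)` in `ℚ[[t]]`,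
`T(u) = 1 + tuT(u)^2T` in `ℚ[[t,u]]` with constant term 1,
`H_j(u) = (1 - X^{j+1})XT(u) - (1+X)(1-X^{j+2})` for `j ≥ -2` (here `H k = H_{k-2}(u)`,
using `(1-X^{j+1})X = X - X^{j+2}` so that `j = -2` makes sense), and
`T_j(u) = T(u)·(H_j(u)/H_{j-1}(u))·((1-X^{j+2})/(1-X^{j+3}))` for `j ≥ -1`
(here `TTu k = T_{k-1}(u)`, stated multiplicatively since the denominators are invertible),
the family satisfies `T_{-1}(u) = 1` and `T_j(u) = 1 + tu·T_{j+1}(u)·T_j(u)·T_{j-1}` for all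
`j ≥ 0`, where `T_{j-1} = T_{j-1}(1)` is given by Kuba's formula
`T_k = T(1-X^{k+5})(1-X^{k+2})/((1-X^{k+4})(1-X^{k+3}))` (here `TK m = T_{m-1}`, again stated
multiplicatively). -/
theorem refined_kuba (T Xs : PowerSeries ℚ)
    (hT0 : PowerSeries.constantCoeff (R := ℚ) T = 1)
    (hT : T = 1 + PowerSeries.X * T ^ 3)
    (hXs0 : PowerSeries.constantCoeff (R := ℚ) Xs = 0)
    (hXs : Xs = PowerSeries.X * T ^ 2 * (1 + Xs + Xs ^ 2))
    (Tu : QTU)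
    (hTu0 : PowerSeries.constantCoeff (R := ℚ) (PowerSeries.constantCoeff (R := PowerSeries ℚ) Tu) = 1)
    (hTu : Tu = 1 + tVar * uVar * Tu ^ 2 * liftT T)
    (H : ℕ → QTU)
    (hH : ∀ k : ℕ, H k = (liftT Xs - liftT (Xs ^ k)) * Tu - (1 + liftT Xs) * (1 - liftT (Xs ^ k)))
    (TTu : ℕ → QTU)
    (hTTu : ∀ k : ℕ, TTu k * H k * (1 - liftT (Xs ^ (k + 2)))
        = Tu * H (k + 1) * (1 - liftT (Xs ^ (k + 1))))
    (TK : ℕ → PowerSeries ℚ)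
    (hTK : ∀ m : ℕ, TK m * ((1 - Xs ^ (m + 3)) * (1 - Xs ^ (m + 2)))
        = T * (1 - Xs ^ (m + 4)) * (1 - Xs ^ (m + 1))) :
    TTu 0 = 1 ∧
      ∀ j : ℕ, TTu (j + 1) = 1 + tVar * uVar * TTu (j + 2) * TTu (j + 1) * liftT (TK j) :=
  refined_kuba_general T Xs hXs0 Tu hTu0 hTu H hH TTu hTTu TK hTK
end

section
/- Let B(u) and B be formal power series (B = B(1) being the specialization u = 1) satisfying, with y = a = b = 1, B(u) = tu·T(u)^2 and B(u) = (T(u)-1)(1-B) where T = 1/(1-B) and T(u) = 1 + B(u)T. Then the series P(u) := B(u) - B(u)^2·B/(1-B)^2 satisfies 1 + P(u) = T(u)(1+B) - T(u)^2·B. -/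
theorem one_add_eq_of_mul_sq_eq_of_isUnit {R : Type*} [CommRing R] {β b s p : R}
    (hβ : IsUnit (1 - β)) (hb : b = (s - 1) * (1 - β))
    (hp : p * (1 - β) ^ 2 = b * (1 - β) ^ 2 - b ^ 2 * β) :
    1 + p = s * (1 + β) - s ^ 2 * β := by
  have hp_explicit : p = (s - 1) * (1 - β) - (s - 1) ^ 2 * β :=
    (hβ.pow 2).mul_right_cancel (by rw [hp, hb]; ring)
  rw [hp_explicit]
  ring

theorem isUnit_one_sub_liftT {T B : PowerSeries ℚ} (h : T * (1 - B) = 1) :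
    IsUnit (1 - liftT B) := by
  simpa [liftT] using (IsUnit.of_mul_eq_one_right T h).map PowerSeries.C

theorem fish_fin_tree_core_identity_general (T B : PowerSeries ℚ)
    (hTB : T * (1 - B) = 1)
    (Bu Tu P : QTU)
    (hBu2 : Bu = (Tu - 1) * (1 - liftT B))
    (hP : P * (1 - liftT B) ^ 2 = Bu * (1 - liftT B) ^ 2 - Bu ^ 2 * liftT B) :
    1 + P = Tu * (1 + liftT B) - Tu ^ 2 * liftT B :=
  one_add_eq_of_mul_sq_eq_of_isUnit (isUnit_one_sub_liftT hTB) hBu2 hP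

/-- With `y = a = b = 1`: if `B(u) = tuT(u)^2`, `B(u) = (T(u)-1)(1-B)`, `T = 1/(1-B)`
(i.e. `T(1-B) = 1`) and `T(u) = 1 + B(u)T`, then the series
`P(u) := B(u) - B(u)^2·B/(1-B)^2` (defined multiplicatively, `(1-B)` being invertible)
satisfies `1 + P(u) = T(u)(1+B) - T(u)^2·B`. -/
theorem fish_fin_tree_core_identity (T B : PowerSeries ℚ)
    (hTB : T * (1 - B) = 1)
    (Bu Tu P : QTU)
    (hBu1 : Bu = tVar * uVar * Tu ^ 2)
    (hBu2 : Bu = (Tu - 1) * (1 - liftT B))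
    (hTu : Tu = 1 + Bu * liftT T)
    (hP : P * (1 - liftT B) ^ 2 = Bu * (1 - liftT B) ^ 2 - Bu ^ 2 * liftT B) :
    1 + P = Tu * (1 + liftT B) - Tu ^ 2 * liftT B :=
  fish_fin_tree_core_identity_general T B hTB Bu Tu P hBu2 hP
end

section
/- Let a, b be indeterminates and let R, S be the unique formal power series in ℚ[[a,b]] with zero constant term satisfying R = a(1+R)(1+S)^2 and S = b(1+R)^2(1+S). Then for all integers i, j ≥ 1, the coefficient of a^{i-1}b^{j-1} in the series (1+R)(1+S)(1 - RS) equals (1/(i·j))·C(2j+i-2, i-1)·C(2i+j-2, j-1). -/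
/-!
Bivariate Lagrange inversion for `R = a (1+R)(1+S)²`, `S = b (1+R)²(1+S)`, whose Jacobian factor
is `(1 - 4xy) / ((1+x)(1+y))`, predicts
`[a^m b^n] (1+R)^p (1+S)^q = [x^m y^n] (1+x)^(m+2n+p-1) (1+y)^(n+2m+q-1) (1 - 4xy)`.
This formula is checked directly by induction on `m + n`: the defining equations give
`(1+R)^(p+1) (1+S)^q = (1+R)^p (1+S)^q + a (1+R)^(p+1) (1+S)^(q+2)` (and symmetrically in `S`),
which is Pascal's rule on the right-hand side, and at `p = q = 0` both sides are `[m = n = 0]`.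
Since `(1+R)(1+S)(1-RS) = (1+R)²(1+S) + (1+R)(1+S)² - (1+R)²(1+S)²`, the claimed coefficient is a
combination of three such binomial expressions, and it simplifies to the product formula.
-/

open MvPowerSeries

namespace Nat

variable {K : Type*} [Field K] [CharZero K]

theorem cast_choose_succ_right_eq_div {N k l : ℕ} (h : k + l = N) :
    (N.choose (k + 1) : K) = N.choose k * l / (k + 1) := by
  have := Nat.choose_succ_right_eq N k
  rw [show N - k = l by omega] at this
  rw [eq_div_iff (by exact_mod_cast k.succ_ne_zero)]
  exact_mod_cast this

theorem cast_add_choose_eq_div (k l : ℕ) :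
    ((k + l).choose k : K) = (k + l + 1).choose k * (l + 1) / (k + l + 1) := by
  have := Nat.choose_mul_succ_eq (k + l) k
  rw [show k + l + 1 - k = l + 1 by omega] at this
  rw [eq_div_iff (by exact_mod_cast (k + l).succ_ne_zero)]
  exact_mod_cast this

end Nat

/-- The coefficient of `x^m y^n` in `(1+x)^E (1+y)^F (1 - 4xy)`. -/
def lagrangeCoeff (E F m n : ℕ) : ℚ :=
  E.choose m * F.choose n - if m = 0 ∨ n = 0 then 0 else 4 * E.choose (m - 1) * F.choose (n - 1)

namespace lagrangeCoeff

@[simp] theorem zero_left (E F n : ℕ) : lagrangeCoeff E F 0 n = F.choose n := by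
  simp [lagrangeCoeff]

@[simp] theorem zero_right (E F m : ℕ) : lagrangeCoeff E F m 0 = E.choose m := by
  simp [lagrangeCoeff]

theorem succ_succ (E F m n : ℕ) :
    lagrangeCoeff E F (m + 1) (n + 1)
      = E.choose (m + 1) * F.choose (n + 1) - 4 * E.choose m * F.choose n := by
  simp [lagrangeCoeff]

theorem succ_left (E F m n : ℕ) :
    lagrangeCoeff (E + 1) F (m + 1) n = lagrangeCoeff E F (m + 1) n + lagrangeCoeff E F m n := by
  rcases n with _ | n
  · simp [Nat.choose_succ_succ', add_comm]
  rcases m with _ | m <;>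
    simp only [succ_succ, zero_left, Nat.choose_succ_succ', Nat.choose_zero_right] <;>
    push_cast <;> ring

theorem succ_right (E F m n : ℕ) :
    lagrangeCoeff E (F + 1) m (n + 1) = lagrangeCoeff E F m (n + 1) + lagrangeCoeff E F m n := by
  rcases m with _ | m
  · simp [Nat.choose_succ_succ', add_comm]
  rcases n with _ | n <;>
    simp only [succ_succ, zero_right, Nat.choose_succ_succ', Nat.choose_zero_right] <;>
    push_cast <;> ring

theorem add_add (m k n l : ℕ) :
    lagrangeCoeff (m + k) (n + l) m n
      = (m + k).choose m * (n + l).choose n * (1 - 4 * m * n / ((k + 1) * (l + 1))) := by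
  rcases m with _ | m
  · simp
  rcases n with _ | n
  · simp
  rw [succ_succ, Nat.cast_choose_succ_right_eq_div (l := k + 1) (by ring),
    Nat.cast_choose_succ_right_eq_div (l := l + 1) (by ring)]
  field_simp
  push_cast
  ring

theorem sub_one_sub_one (m n : ℕ) :
    lagrangeCoeff (m + 2 * n - 1) (n + 2 * m - 1) m n = if m = 0 ∧ n = 0 then 1 else 0 := by
  rcases m with _ | m
  · rcases n with _ | n <;> simp
  rcases n with _ | n
  · simp
  rw [if_neg (by omega), show m + 1 + 2 * (n + 1) - 1 = m + 1 + (2 * n + 1) by omega,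
    show n + 1 + 2 * (m + 1) - 1 = n + 1 + (2 * m + 1) by omega, add_add]
  field_simp
  push_cast
  ring

theorem fish (m n : ℕ) :
    lagrangeCoeff (m + 2 * n + 1) (n + 2 * m) m n + lagrangeCoeff (m + 2 * n) (n + 2 * m + 1) m n
        - lagrangeCoeff (m + 2 * n + 1) (n + 2 * m + 1) m n
      = (m + 2 * n + 1).choose m * (n + 2 * m + 1).choose n / ((m + 1) * (n + 1)) := by
  rw [add_assoc m, add_assoc n, add_add, add_add, add_add,
    Nat.cast_add_choose_eq_div m (2 * n), Nat.cast_add_choose_eq_div n (2 * m)]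
  simp only [← add_assoc]
  field_simp
  push_cast
  ring

end lagrangeCoeff

namespace MvPowerSeries

variable {σ R : Type*} [CommSemiring R]

theorem coeff_single_add_X_mul (s : σ) (d : σ →₀ ℕ) (φ : MvPowerSeries σ R) :
    coeff (Finsupp.single s 1 + d) (X s * φ) = coeff d φ := by
  rw [X, coeff_add_monomial_mul, one_mul]

theorem coeff_X_mul_of_apply_eq_zero {s : σ} {d : σ →₀ ℕ} (h : d s = 0) (φ : MvPowerSeries σ R) :
    coeff d (X s * φ) = 0 := by
  classical
  rw [X, coeff_monomial_mul, if_neg]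
  intro hle
  simpa [h] using hle s

end MvPowerSeries

noncomputable def bideg (m n : ℕ) : Fin 2 →₀ ℕ := Finsupp.single 0 m + Finsupp.single 1 n

theorem bideg_succ_left (m n : ℕ) : bideg (m + 1) n = Finsupp.single 0 1 + bideg m n := by
  simp only [bideg, Finsupp.single_add, add_comm m 1, add_assoc]

theorem bideg_succ_right (m n : ℕ) : bideg m (n + 1) = Finsupp.single 1 1 + bideg m n := by
  simp only [bideg, Finsupp.single_add, add_comm n 1]
  abel

@[simp] theorem bideg_apply_zero (m n : ℕ) : bideg m n 0 = m := by simp [bideg]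

@[simp] theorem bideg_apply_one (m n : ℕ) : bideg m n 1 = n := by simp [bideg]

theorem bideg_eq_zero {m n : ℕ} : bideg m n = 0 ↔ m = 0 ∧ n = 0 := by
  simp [bideg, Finsupp.ext_iff, Fin.forall_fin_two]

section Recursion

variable {R S : MvPowerSeries (Fin 2) ℚ}

theorem pow_succ_mul_pow_of_eq (hR : R = X 0 * (1 + R) * (1 + S) ^ 2) (p q : ℕ) :
    (1 + R) ^ (p + 1) * (1 + S) ^ q
      = (1 + R) ^ p * (1 + S) ^ q + X 0 * ((1 + R) ^ (p + 1) * (1 + S) ^ (q + 2)) := by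
  linear_combination (1 + R) ^ p * (1 + S) ^ q * hR

theorem pow_mul_pow_succ_of_eq (hS : S = X 1 * (1 + R) ^ 2 * (1 + S)) (p q : ℕ) :
    (1 + R) ^ p * (1 + S) ^ (q + 1)
      = (1 + R) ^ p * (1 + S) ^ q + X 1 * ((1 + R) ^ (p + 2) * (1 + S) ^ (q + 1)) := by
  linear_combination (1 + R) ^ p * (1 + S) ^ q * hS

/-- The truncated `- 1` only bites at `m = n = p = 0` (resp. `m = n = q = 0`), where only
`Nat.choose _ 0 = 1` is read from that exponent. -/
theorem coeff_pow_mul_pow (hR : R = X 0 * (1 + R) * (1 + S) ^ 2)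
    (hS : S = X 1 * (1 + R) ^ 2 * (1 + S)) :
    ∀ p q m n, coeff (bideg m n) ((1 + R) ^ p * (1 + S) ^ q)
      = lagrangeCoeff (m + 2 * n + p - 1) (n + 2 * m + q - 1) m n
  | 0, 0, m, n => by
    classical
    simp [coeff_one, bideg_eq_zero, lagrangeCoeff.sub_one_sub_one]
  | 0, q + 1, m, 0 => by
    rw [pow_mul_pow_succ_of_eq hS, map_add, coeff_X_mul_of_apply_eq_zero (bideg_apply_one m 0),
      add_zero, coeff_pow_mul_pow hR hS 0 q m 0]
    simp
  | 0, q + 1, m, n + 1 => by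
    rw [pow_mul_pow_succ_of_eq hS, map_add, coeff_pow_mul_pow hR hS 0 q m (n + 1),
      bideg_succ_right, coeff_single_add_X_mul, coeff_pow_mul_pow hR hS 2 (q + 1) m n]
    convert (lagrangeCoeff.succ_right (m + 2 * n + 1) (n + 2 * m + q) m n).symm using 3 <;> omega
  | p + 1, q, 0, n => by
    rw [pow_succ_mul_pow_of_eq hR, map_add, coeff_X_mul_of_apply_eq_zero (bideg_apply_zero 0 n),
      add_zero, coeff_pow_mul_pow hR hS p q 0 n]
    simp
  | p + 1, q, m + 1, n => by
    rw [pow_succ_mul_pow_of_eq hR, map_add, coeff_pow_mul_pow hR hS p q (m + 1) n,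
      bideg_succ_left, coeff_single_add_X_mul, coeff_pow_mul_pow hR hS (p + 1) (q + 2) m n]
    convert (lagrangeCoeff.succ_left (m + 2 * n + p) (n + 2 * m + q + 1) m n).symm using 3 <;> omega
termination_by p q m n => (m + n, p, q)

end Recursion

theorem fish_count_coeff_general (R S : MvPowerSeries (Fin 2) ℚ)
    (hR : R = MvPowerSeries.X 0 * (1 + R) * (1 + S) ^ 2)
    (hS : S = MvPowerSeries.X 1 * (1 + R) ^ 2 * (1 + S))
    (i j : ℕ) (hi : 1 ≤ i) (hj : 1 ≤ j) :
    MvPowerSeries.coeff (Finsupp.single 0 (i - 1) + Finsupp.single 1 (j - 1))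
        ((1 + R) * (1 + S) * (1 - R * S))
      = (1 / ((i : ℚ) * (j : ℚ))) * (Nat.choose (2*j + i - 2) (i - 1) : ℚ) *
          (Nat.choose (2*i + j - 2) (j - 1) : ℚ) := by
  obtain ⟨m, rfl⟩ : ∃ m, i = m + 1 := ⟨i - 1, by omega⟩
  obtain ⟨n, rfl⟩ : ∃ n, j = n + 1 := ⟨j - 1, by omega⟩
  have hsplit : (1 + R) * (1 + S) * (1 - R * S)
      = (1 + R) ^ 2 * (1 + S) ^ 1 + (1 + R) ^ 1 * (1 + S) ^ 2 - (1 + R) ^ 2 * (1 + S) ^ 2 := by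
    ring
  rw [hsplit, map_sub, map_add, Nat.add_sub_cancel, Nat.add_sub_cancel, ← bideg,
    coeff_pow_mul_pow hR hS, coeff_pow_mul_pow hR hS, coeff_pow_mul_pow hR hS]
  simp only [Nat.add_sub_cancel, Nat.reduceSubDiff]
  rw [lagrangeCoeff.fish, show 2 * (n + 1) + (m + 1) - 2 = m + 2 * n + 1 by omega,
    show 2 * (m + 1) + (n + 1) - 2 = n + 2 * m + 1 by omega]
  push_cast
  ring

/-- Bivariate Lagrange inversion result counting fighting fish: if `R, S ∈ ℚ[[a,b]]` have zero
constant term and satisfy `R = a(1+R)(1+S)^2`, `S = b(1+R)^2(1+S)`, then the coefficient of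
`a^{i-1}b^{j-1}` in `(1+R)(1+S)(1-RS)` equals `(1/(ij))·C(2j+i-2, i-1)·C(2i+j-2, j-1)`. -/
theorem fish_count_coeff (R S : MvPowerSeries (Fin 2) ℚ)
    (hR0 : MvPowerSeries.constantCoeff R = 0)
    (hS0 : MvPowerSeries.constantCoeff S = 0)
    (hR : R = MvPowerSeries.X 0 * (1 + R) * (1 + S) ^ 2)
    (hS : S = MvPowerSeries.X 1 * (1 + R) ^ 2 * (1 + S))
    (i j : ℕ) (hi : 1 ≤ i) (hj : 1 ≤ j) :
    MvPowerSeries.coeff (Finsupp.single 0 (i - 1) + Finsupp.single 1 (j - 1))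
        ((1 + R) * (1 + S) * (1 - R * S))
      = (1 / ((i : ℚ) * (j : ℚ))) * (Nat.choose (2*j + i - 2) (i - 1) : ℚ) *
          (Nat.choose (2*i + j - 2) (j - 1) : ℚ) :=
  fish_count_coeff_general R S hR hS i j hi hj
end

section
/- Let R, S ∈ ℚ[[a,b]] with zero constant terms satisfy R = a(1+R)(1+S)^2 and S = b(1+R)^2(1+S). Then for all integers i, j ≥ 1, the coefficient of a^{i-1}b^{j-1} in (1+R)(1+S) equals ((2i+2j-3)/((2i-1)(2j-1)))·C(2j+i-3, i-1)·C(2i+j-3, j-1). -/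
/-!
Write `c p q i j` for the coefficient of `a^i b^j` in `(1+R)^p (1+S)^q`. Multiplying the
functional equations by `(1+R)^p (1+S)^q` gives
`(1+R)^(p+1) (1+S)^q = (1+R)^p (1+S)^q + a (1+R)^(p+1) (1+S)^(q+2)` and its mirror image, i.e.
recurrences for `c` that either lower `i + j` or keep `(i, j)` and lower `p` or `q`; with
`c 0 0 i j = [i = j = 0]` they determine `c`. The closed form (found by Lagrange inversion)
`C(p+i+2j-1, i) C(q+2i+j-1, j) - 4 C(p+i+2j-1, i-1) C(q+2i+j-1, j-1)` satisfies the same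
recurrences by Pascal's rule, and at `p = q = 1` it reduces to the stated product.
-/

open MvPowerSeries Finsupp

namespace MvPowerSeries

variable {σ R : Type*} [CommSemiring R]

theorem coeff_add_single_X_mul (s : σ) (n : σ →₀ ℕ) (f : MvPowerSeries σ R) :
    coeff (n + single s 1) (X s * f) = coeff n f := by
  rw [add_comm, X, coeff_add_monomial_mul, one_mul]

theorem coeff_X_mul_of_eq_zero {s : σ} {n : σ →₀ ℕ} (hn : n s = 0)
    (f : MvPowerSeries σ R) : coeff n (X s * f) = 0 := by
  rw [X, coeff_monomial_mul, if_neg]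
  intro h
  simpa [hn] using h s

end MvPowerSeries

structure FishRecurrence {M : Type*} [Add M] (c : ℕ → ℕ → ℕ → ℕ → M) : Prop where
  succ_left_zero : ∀ p q j, c (p + 1) q 0 j = c p q 0 j
  succ_left_succ : ∀ p q i j, c (p + 1) q (i + 1) j = c p q (i + 1) j + c (p + 1) (q + 2) i j
  succ_right_zero : ∀ p q i, c p (q + 1) i 0 = c p q i 0
  succ_right_succ : ∀ p q i j, c p (q + 1) i (j + 1) = c p q i (j + 1) + c (p + 2) (q + 1) i j

theorem FishRecurrence.eq {M : Type*} [Add M] {c d : ℕ → ℕ → ℕ → ℕ → M}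
    (hc : FishRecurrence c) (hd : FishRecurrence d) (h₀ : c 0 0 = d 0 0) : c = d := by
  suffices ∀ n i j, i + j = n → ∀ p q, c p q i j = d p q i j by
    funext p q i j
    exact this _ i j rfl p q
  intro n
  induction n using Nat.strong_induction_on with
  | _ n ih =>
  intro i j hij
  have hp₀ : ∀ q, c 0 q i j = d 0 q i j := by
    intro q
    induction q with
    | zero => exact congrFun (congrFun h₀ i) j
    | succ q ihq =>
      rcases j with _ | j
      · rw [hc.succ_right_zero, hd.succ_right_zero, ihq]
      · rw [hc.succ_right_succ, hd.succ_right_succ, ihq, ih (i + j) (by omega) i j rfl]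
  intro p
  induction p with
  | zero => exact hp₀
  | succ p ihp =>
    intro q
    rcases i with _ | i
    · rw [hc.succ_left_zero, hd.succ_left_zero, ihp]
    · rw [hc.succ_left_succ, hd.succ_left_succ, ihp, ih (i + j) (by omega) i j rfl]

theorem fishRecurrence_coeff {R S : MvPowerSeries (Fin 2) ℚ}
    (hR : R = X 0 * (1 + R) * (1 + S) ^ 2) (hS : S = X 1 * (1 + R) ^ 2 * (1 + S)) :
    FishRecurrence fun p q i j ↦
      coeff (single 0 i + single 1 j) ((1 + R) ^ p * (1 + S) ^ q) := by
  have hp : ∀ p q, (1 + R) ^ (p + 1) * (1 + S) ^ q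
      = (1 + R) ^ p * (1 + S) ^ q + X 0 * ((1 + R) ^ (p + 1) * (1 + S) ^ (q + 2)) := by
    intro p q; linear_combination (1 + R) ^ p * (1 + S) ^ q * hR
  have hq : ∀ p q, (1 + R) ^ p * (1 + S) ^ (q + 1)
      = (1 + R) ^ p * (1 + S) ^ q + X 1 * ((1 + R) ^ (p + 2) * (1 + S) ^ (q + 1)) := by
    intro p q; linear_combination (1 + R) ^ p * (1 + S) ^ q * hS
  refine ⟨fun p q j ↦ ?_, fun p q i j ↦ ?_, fun p q i ↦ ?_, fun p q i j ↦ ?_⟩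
  · rw [hp, map_add, coeff_X_mul_of_eq_zero (by simp), add_zero]
  · rw [hp, map_add, ← coeff_add_single_X_mul 0 (single 0 i + single 1 j)]
    congr 3
    rw [single_add, add_right_comm]
  · rw [hq, map_add, coeff_X_mul_of_eq_zero (by simp), add_zero]
  · rw [hq, map_add, ← coeff_add_single_X_mul 1 (single 0 i + single 1 j)]
    congr 3
    rw [single_add, add_assoc]

-- The closed form of the header, with `i = 0` and `j = 0` split off so that `i - 1` and `j - 1`
-- never truncate; on those edges it reduces to a multiset coefficient.
def fishCoeff (p q : ℕ) : ℕ → ℕ → ℚ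
  | 0, j => q.multichoose j
  | i + 1, 0 => p.multichoose (i + 1)
  | i + 1, j + 1 =>
      (p + i + 2 * j + 2).choose (i + 1) * (q + 2 * i + j + 2).choose (j + 1) -
        4 * (p + i + 2 * j + 2).choose i * (q + 2 * i + j + 2).choose j

theorem cast_choose_succ_succ (n k : ℕ) :
    ((n + 1).choose (k + 1) : ℚ) = n.choose k + n.choose (k + 1) := by
  exact_mod_cast Nat.choose_succ_succ n k

theorem cast_choose_succ_mul (k m : ℕ) :
    ((k + m).choose (k + 1) : ℚ) * (k + 1) = (k + m).choose k * m := by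
  exact_mod_cast (Nat.choose_succ_right_eq (k + m) k).trans (by rw [Nat.add_sub_cancel_left])

theorem fishCoeff_zero_right (p q i : ℕ) : fishCoeff p q i 0 = p.multichoose i := by
  rcases i with _ | i <;> simp [fishCoeff]

theorem fishCoeff_comm (p q i j : ℕ) : fishCoeff p q i j = fishCoeff q p j i := by
  rcases i with _ | i <;> rcases j with _ | j
  · simp [fishCoeff]
  · rfl
  · rfl
  · simp only [fishCoeff]
    rw [show q + j + 2 * i + 2 = q + 2 * i + j + 2 by ring,
      show p + 2 * j + i + 2 = p + i + 2 * j + 2 by ring]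
    ring

theorem fishCoeff_succ_left_succ (p q i j : ℕ) :
    fishCoeff (p + 1) q (i + 1) j = fishCoeff p q (i + 1) j + fishCoeff (p + 1) (q + 2) i j := by
  rcases j with _ | j
  · simp only [fishCoeff_zero_right, Nat.multichoose_succ_succ, Nat.cast_add]
  rcases i with _ | i
  · simp only [fishCoeff, Nat.multichoose_eq]
    rw [show q + 2 + (j + 1) - 1 = q + 2 * 0 + j + 2 by omega]
    simp only [mul_zero, add_zero, zero_add, Nat.choose_one_right, Nat.choose_zero_right]
    push_cast
    ring
  · simp only [fishCoeff]
    rw [show p + 1 + (i + 1) + 2 * j + 2 = (p + i + 2 * j + 3) + 1 by ring,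
      show p + (i + 1) + 2 * j + 2 = p + i + 2 * j + 3 by ring,
      show p + 1 + i + 2 * j + 2 = p + i + 2 * j + 3 by ring,
      show q + 2 * (i + 1) + j + 2 = q + 2 * i + j + 4 by ring,
      show q + 2 + 2 * i + j + 2 = q + 2 * i + j + 4 by ring,
      cast_choose_succ_succ (p + i + 2 * j + 3) (i + 1),
      cast_choose_succ_succ (p + i + 2 * j + 3) i]
    ring

theorem fishRecurrence_fishCoeff : FishRecurrence fishCoeff where
  succ_left_zero _ _ _ := rfl
  succ_left_succ := fishCoeff_succ_left_succ
  succ_right_zero p q i := by simp only [fishCoeff_zero_right]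
  succ_right_succ p q i j := by
    rw [fishCoeff_comm, fishCoeff_succ_left_succ, fishCoeff_comm q, fishCoeff_comm (q + 1)]

theorem fishCoeff_zero_zero (i j : ℕ) :
    fishCoeff 0 0 i j = coeff (single 0 i + single 1 j) (1 : MvPowerSeries (Fin 2) ℚ) := by
  rw [coeff_one]
  rcases i with _ | i <;> rcases j with _ | j
  case succ.succ =>
    rw [if_neg (by simp)]
    have hi := cast_choose_succ_mul i (2 * j + 2)
    have hj := cast_choose_succ_mul j (2 * i + 2)
    push_cast at hi hj
    simp only [fishCoeff, zero_add]
    rw [show i + 2 * j + 2 = i + (2 * j + 2) by ring, show 2 * i + j + 2 = j + (2 * i + 2) by ring]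
    refine mul_right_cancel₀ (b := ((i : ℚ) + 1) * (j + 1)) (by positivity) ?_
    linear_combination (↑((j + (2 * i + 2)).choose (j + 1)) * (j + 1)) * hi
      + (↑((i + (2 * j + 2)).choose i) * (2 * j + 2)) * hj
  all_goals simp [fishCoeff]

theorem fishCoeff_one_one (i j : ℕ) :
    fishCoeff 1 1 i j = ((2 * i + 2 * j + 1 : ℕ) : ℚ) /
      (((2 * i + 1 : ℕ) : ℚ) * ((2 * j + 1 : ℕ) : ℚ)) *
        (i + 2 * j).choose i * (2 * i + j).choose j := by
  rcases i with _ | i <;> rcases j with _ | j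
  case succ.succ =>
    have hi := cast_choose_succ_mul i (2 * j + 3)
    have hj := cast_choose_succ_mul j (2 * i + 3)
    simp only [fishCoeff]
    rw [show 1 + i + 2 * j + 2 = i + (2 * j + 3) by ring,
      show 1 + 2 * i + j + 2 = j + (2 * i + 3) by ring,
      show i + 1 + 2 * (j + 1) = i + (2 * j + 3) by ring,
      show 2 * (i + 1) + (j + 1) = j + (2 * i + 3) by ring]
    push_cast at hi hj ⊢
    field_simp
    linear_combination 4 * (↑((j + (2 * i + 3)).choose (j + 1)) * (j + 1)) * hi
      + 4 * (↑((i + (2 * j + 3)).choose i) * (2 * j + 3)) * hj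
  all_goals simp [fishCoeff] <;> field_simp

theorem coeff_eq_fishCoeff {R S : MvPowerSeries (Fin 2) ℚ}
    (hR : R = X 0 * (1 + R) * (1 + S) ^ 2) (hS : S = X 1 * (1 + R) ^ 2 * (1 + S)) (p q i j : ℕ) :
    coeff (single 0 i + single 1 j) ((1 + R) ^ p * (1 + S) ^ q) = fishCoeff p q i j := by
  have h := (fishRecurrence_coeff hR hS).eq fishRecurrence_fishCoeff <| by
    funext i j
    simp only [pow_zero, one_mul, fishCoeff_zero_zero]
  exact congrFun (congrFun (congrFun (congrFun h p) q) i) j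

theorem marked_tail_coeff_general (R S : MvPowerSeries (Fin 2) ℚ)
    (hR : R = MvPowerSeries.X 0 * (1 + R) * (1 + S) ^ 2)
    (hS : S = MvPowerSeries.X 1 * (1 + R) ^ 2 * (1 + S))
    (i j : ℕ) (hi : 1 ≤ i) (hj : 1 ≤ j) :
    MvPowerSeries.coeff (Finsupp.single 0 (i - 1) + Finsupp.single 1 (j - 1))
        ((1 + R) * (1 + S))
      = (((2*i + 2*j - 3 : ℕ) : ℚ) / (((2*i - 1 : ℕ) : ℚ) * ((2*j - 1 : ℕ) : ℚ))) *
          (Nat.choose (2*j + i - 3) (i - 1) : ℚ) * (Nat.choose (2*i + j - 3) (j - 1) : ℚ) := by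
  obtain ⟨i, rfl⟩ : ∃ k, i = k + 1 := ⟨i - 1, by omega⟩
  obtain ⟨j, rfl⟩ : ∃ k, j = k + 1 := ⟨j - 1, by omega⟩
  have h := coeff_eq_fishCoeff hR hS 1 1 i j
  rw [pow_one, pow_one, fishCoeff_one_one] at h
  simp only [Nat.add_sub_cancel]
  rw [h, show 2 * (i + 1) + 2 * (j + 1) - 3 = 2 * i + 2 * j + 1 by omega,
    show 2 * (i + 1) - 1 = 2 * i + 1 by omega, show 2 * (j + 1) - 1 = 2 * j + 1 by omega,
    show 2 * (j + 1) + (i + 1) - 3 = i + 2 * j by omega,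
    show 2 * (i + 1) + (j + 1) - 3 = 2 * i + j by omega]

/-- Bivariate Lagrange inversion result counting fighting fish with a marked tail: if
`R, S ∈ ℚ[[a,b]]` have zero constant term and satisfy `R = a(1+R)(1+S)^2`,
`S = b(1+R)^2(1+S)`, then the coefficient of `a^{i-1}b^{j-1}` in `(1+R)(1+S)` equals
`((2i+2j-3)/((2i-1)(2j-1)))·C(2j+i-3, i-1)·C(2i+j-3, j-1)`. -/
theorem marked_tail_coeff (R S : MvPowerSeries (Fin 2) ℚ)
    (hR0 : MvPowerSeries.constantCoeff R = 0)
    (hS0 : MvPowerSeries.constantCoeff S = 0)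
    (hR : R = MvPowerSeries.X 0 * (1 + R) * (1 + S) ^ 2)
    (hS : S = MvPowerSeries.X 1 * (1 + R) ^ 2 * (1 + S))
    (i j : ℕ) (hi : 1 ≤ i) (hj : 1 ≤ j) :
    MvPowerSeries.coeff (Finsupp.single 0 (i - 1) + Finsupp.single 1 (j - 1))
        ((1 + R) * (1 + S))
      = (((2*i + 2*j - 3 : ℕ) : ℚ) / (((2*i - 1 : ℕ) : ℚ) * ((2*j - 1 : ℕ) : ℚ))) *
          (Nat.choose (2*j + i - 3) (i - 1) : ℚ) * (Nat.choose (2*i + j - 3) (j - 1) : ℚ) :=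
  marked_tail_coeff_general R S hR hS i j hi hj
end

section
/- Suppose formal power series U, Q, P1 over ℚ[y,a,b] in t satisfy U = 1 + yabQ^2/(1-abQ^2), Q = tU^2(1+aQ)(1+bQ), and (U-1)Q = tU(U-1)(1+aQ)(1+bQ) + ytUabQ(Q - P1), where U has constant term 1 and Q, P1 have constant term 0. Then P1 = Q - yabQ^3(1+aQ)(1+bQ)/(1-abQ^2)^2. -/
/-- The coefficient ring `ℚ[y,a,b]`. -/
abbrev Ryab : Type := MvPolynomial (Fin 3) ℚ

/-- The ring `ℚ[y,a,b][[t]]`. -/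
abbrev Fish : Type := PowerSeries Ryab

noncomputable def yv : Fish := (PowerSeries.C (R := Ryab)) (MvPolynomial.X 0)
noncomputable def av : Fish := (PowerSeries.C (R := Ryab)) (MvPolynomial.X 1)
noncomputable def bv : Fish := (PowerSeries.C (R := Ryab)) (MvPolynomial.X 2)
noncomputable def tv : Fish := PowerSeries.X

/-!
Write `K = 1 - abQ²` and `F = (1+aQ)(1+bQ)`, so that `(U-1)K = yabQ²` and `Q = tU²F`.
Multiplying the kernel equation by `K` makes every term divisible by `yabQ`; cancelling it and
using `Q = tU²F` leaves `(U-1)Q² = tU²(Q-P1)K`. Multiplying by `KF` and substituting once more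
gives `Q · yabQ³F = Q · (Q-P1)K²`, and `Q ≠ 0` because `Q = 0` would force `U = 1` and `t = 0`.
-/

section KernelMethod

variable {R : Type*} [CommRing R] {y a b t U Q P : R}

lemma ne_zero_of_kernel_eqs (ht : t ≠ 0)
    (hU : (U - 1) * (1 - a * b * Q ^ 2) = y * a * b * Q ^ 2)
    (hQ : Q = t * U ^ 2 * (1 + a * Q) * (1 + b * Q)) : Q ≠ 0 := by
  rintro rfl
  obtain rfl : U = 1 := by linear_combination hU
  exact ht (by linear_combination -hQ)

lemma sub_one_mul_sq_eq_of_kernel_eqs [IsDomain R] (hy : y ≠ 0) (ha : a ≠ 0) (hb : b ≠ 0)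
    (hQne : Q ≠ 0)
    (hU : (U - 1) * (1 - a * b * Q ^ 2) = y * a * b * Q ^ 2)
    (hQ : Q = t * U ^ 2 * (1 + a * Q) * (1 + b * Q))
    (h3 : (U - 1) * Q = t * U * (U - 1) * (1 + a * Q) * (1 + b * Q)
        + y * t * U * a * b * Q * (Q - P)) :
    (U - 1) * Q ^ 2 = t * U ^ 2 * (Q - P) * (1 - a * b * Q ^ 2) := by
  refine mul_left_cancel₀ (by simp [hy, ha, hb, hQne] : y * a * b * Q ≠ 0) ?_
  linear_combination U * (1 - a * b * Q ^ 2) * h3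
    - U * (Q - t * U * (1 + a * Q) * (1 + b * Q)) * hU - y * a * b * Q ^ 2 * hQ

theorem mul_one_sub_sq_eq_of_kernel_eqs [IsDomain R] (hy : y ≠ 0) (ha : a ≠ 0) (hb : b ≠ 0)
    (ht : t ≠ 0)
    (hU : (U - 1) * (1 - a * b * Q ^ 2) = y * a * b * Q ^ 2)
    (hQ : Q = t * U ^ 2 * (1 + a * Q) * (1 + b * Q))
    (h3 : (U - 1) * Q = t * U * (U - 1) * (1 + a * Q) * (1 + b * Q)
        + y * t * U * a * b * Q * (Q - P)) :
    P * (1 - a * b * Q ^ 2) ^ 2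
      = Q * (1 - a * b * Q ^ 2) ^ 2 - y * a * b * Q ^ 3 * (1 + a * Q) * (1 + b * Q) := by
  have hQne := ne_zero_of_kernel_eqs ht hU hQ
  have hreduced := sub_one_mul_sq_eq_of_kernel_eqs hy ha hb hQne hU hQ h3
  refine mul_left_cancel₀ hQne ?_
  linear_combination (1 - a * b * Q ^ 2) * (1 + a * Q) * (1 + b * Q) * hreduced
    - Q ^ 2 * (1 + a * Q) * (1 + b * Q) * hU - (Q - P) * (1 - a * b * Q ^ 2) ^ 2 * hQ

end KernelMethod

theorem kernel_final_step_general (U Q P1 : Fish)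
    (hU : (U - 1) * (1 - av * bv * Q ^ 2) = yv * av * bv * Q ^ 2)
    (hQ : Q = tv * U ^ 2 * (1 + av * Q) * (1 + bv * Q))
    (h3 : (U - 1) * Q = tv * U * (U - 1) * (1 + av * Q) * (1 + bv * Q)
        + yv * tv * U * av * bv * Q * (Q - P1)) :
    P1 * (1 - av * bv * Q ^ 2) ^ 2
      = Q * (1 - av * bv * Q ^ 2) ^ 2
        - yv * av * bv * Q ^ 3 * (1 + av * Q) * (1 + bv * Q) := by
  have hC (i : Fin 3) : (PowerSeries.C (MvPolynomial.X i) : Fish) ≠ 0 :=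
    (map_ne_zero_iff _ PowerSeries.C_injective).mpr (MvPolynomial.X_ne_zero i)
  exact mul_one_sub_sq_eq_of_kernel_eqs (hC 0) (hC 1) (hC 2) PowerSeries.X_ne_zero hU hQ h3

/-- Kernel method for fighting fish, final step: the generating series `P1 = P(1)` is given by
`P1 = Q - yabQ^3(1+aQ)(1+bQ)/(1-abQ^2)^2` (stated multiplicatively; `1 - abQ^2` is
invertible since `abQ^2` has zero constant term). -/
theorem kernel_final_step (U Q P1 : Fish)
    (hU0 : PowerSeries.constantCoeff (R := Ryab) U = 1)
    (hQ0 : PowerSeries.constantCoeff (R := Ryab) Q = 0)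
    (hP10 : PowerSeries.constantCoeff (R := Ryab) P1 = 0)
    (hU : (U - 1) * (1 - av * bv * Q ^ 2) = yv * av * bv * Q ^ 2)
    (hQ : Q = tv * U ^ 2 * (1 + av * Q) * (1 + bv * Q))
    (h3 : (U - 1) * Q = tv * U * (U - 1) * (1 + av * Q) * (1 + bv * Q)
        + yv * tv * U * av * bv * Q * (Q - P1)) :
    P1 * (1 - av * bv * Q ^ 2) ^ 2
      = Q * (1 - av * bv * Q ^ 2) ^ 2
        - yv * av * bv * Q ^ 3 * (1 + av * Q) * (1 + bv * Q) :=
  kernel_final_step_general U Q P1 hU hQ h3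
end

section
/- Let B ∈ ℚ[[a,b]] (power series in a and b, with t set to 1 appropriately via the grading) be defined together with R = aB(1+bB)/(1-abB^2) and S = bB(1+aB)/(1-abB^2), where B is the unique series with B = (1+R)(1+S) under the grading giving each of a, b degree 1. Then R = a(1+R)(1+S)^2 and S = b(1+R)^2(1+S), and moreover B - abB^3(1+aB)(1+bB)/(1-abB^2)^2 = (1+R)(1+S)(1 - RS). -/
/-!
Write `U = 1 - abB²`. Adding `U` to `SU = bB(1+aB)` gives `(1+S)U = 1 + bB`. Hence
`RU = aB(1+bB) = a(1+R)(1+S)·(1+S)U`, and cancelling the unit `U` (its constant term is `1`) gives the Lagrangian equation for `R`; the one for `S` is symmetric.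
The last identity needs no cancellation: `abB³(1+aB)(1+bB) = B·(RU)·(SU)`.
-/

section RationalParametrization

variable {A : Type*} [CommRing A] {a b B R S : A}

theorem eq_mul_one_add_mul_one_add_sq (hU : IsRightRegular (1 - a * b * B ^ 2))
    (hR : R * (1 - a * b * B ^ 2) = a * B * (1 + b * B))
    (hS : S * (1 - a * b * B ^ 2) = b * B * (1 + a * B)) (hB : B = (1 + R) * (1 + S)) :
    R = a * (1 + R) * (1 + S) ^ 2 := by
  have hS₁ : (1 + S) * (1 - a * b * B ^ 2) = 1 + b * B := by linear_combination hS
  apply hU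
  calc R * (1 - a * b * B ^ 2) = a * B * (1 + b * B) := hR
    _ = a * B * ((1 + S) * (1 - a * b * B ^ 2)) := by rw [hS₁]
    _ = a * (1 + R) * (1 + S) ^ 2 * (1 - a * b * B ^ 2) := by rw [hB]; ring

theorem mul_sq_sub_eq_of_mul_eq (hR : R * (1 - a * b * B ^ 2) = a * B * (1 + b * B))
    (hS : S * (1 - a * b * B ^ 2) = b * B * (1 + a * B)) (hB : B = (1 + R) * (1 + S)) :
    B * (1 - a * b * B ^ 2) ^ 2 - a * b * B ^ 3 * (1 + a * B) * (1 + b * B)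
      = (1 + R) * (1 + S) * (1 - R * S) * (1 - a * b * B ^ 2) ^ 2 := by
  linear_combination (1 - R * S) * (1 - a * b * B ^ 2) ^ 2 * hB
    + B * S * (1 - a * b * B ^ 2) * hR + a * B ^ 2 * (1 + b * B) * hS

end RationalParametrization

/-- With `y = t = 1`: if `B ∈ ℚ[[a,b]]` has constant term 1 and
`R = aB(1+bB)/(1-abB^2)`, `S = bB(1+aB)/(1-abB^2)` (stated multiplicatively; `1-abB^2` is
invertible), and `B = (1+R)(1+S)`, then `R = a(1+R)(1+S)^2`, `S = b(1+R)^2(1+S)`, and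
`B - abB^3(1+aB)(1+bB)/(1-abB^2)^2 = (1+R)(1+S)(1-RS)` (again stated multiplicatively). -/
theorem change_of_variables_RS (B R S : MvPowerSeries (Fin 2) ℚ)
    (hB0 : MvPowerSeries.constantCoeff B = 1)
    (hR : R * (1 - MvPowerSeries.X 0 * MvPowerSeries.X 1 * B ^ 2)
        = MvPowerSeries.X 0 * B * (1 + MvPowerSeries.X 1 * B))
    (hS : S * (1 - MvPowerSeries.X 0 * MvPowerSeries.X 1 * B ^ 2)
        = MvPowerSeries.X 1 * B * (1 + MvPowerSeries.X 0 * B))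
    (hB : B = (1 + R) * (1 + S)) :
    R = MvPowerSeries.X 0 * (1 + R) * (1 + S) ^ 2 ∧
    S = MvPowerSeries.X 1 * (1 + R) ^ 2 * (1 + S) ∧
    B * (1 - MvPowerSeries.X 0 * MvPowerSeries.X 1 * B ^ 2) ^ 2
        - MvPowerSeries.X 0 * MvPowerSeries.X 1 * B ^ 3
          * (1 + MvPowerSeries.X 0 * B) * (1 + MvPowerSeries.X 1 * B)
      = (1 + R) * (1 + S) * (1 - R * S)
          * (1 - MvPowerSeries.X 0 * MvPowerSeries.X 1 * B ^ 2) ^ 2 := by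
  have hU : IsRightRegular (1 - MvPowerSeries.X 0 * MvPowerSeries.X 1 * B ^ 2) := by
    refine IsUnit.isRegular ((MvPowerSeries.isUnit_iff_constantCoeff).mpr ?_) |>.right
    simp [hB0]
  have hU' : IsRightRegular (1 - MvPowerSeries.X 1 * MvPowerSeries.X 0 * B ^ 2) := by
    rwa [mul_comm (MvPowerSeries.X 1)]
  refine ⟨eq_mul_one_add_mul_one_add_sq hU hR hS hB, ?_,
    mul_sq_sub_eq_of_mul_eq hR hS hB⟩
  have hS' := eq_mul_one_add_mul_one_add_sq hU' (by rwa [mul_comm (MvPowerSeries.X 1)])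
    (by rwa [mul_comm (MvPowerSeries.X 1)]) (hB.trans (mul_comm _ _))
  linear_combination hS'
end

section
/- For all integers i, j ≥ 1, the following identity of rational numbers holds: (1/((i-1)(j-1)))·[ 2(i+j-2)·C(2j+i-3, i-2)·C(2i+j-3, j-2) - 4(i+j-1)·C(2j+i-3, i-3)·C(2i+j-3, j-3) - 2j·C(2j+i-3, i-3)·C(2i+j-3, j-2) - 2i·C(2j+i-3, i-2)·C(2i+j-3, j-3) ] = (1/(ij))·C(2j+i-2, i-1)·C(2i+j-2, j-1), where the left side is interpreted for i, j ≥ 2 (binomials C(n,k) with k < 0 are 0). -/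
/-- Binomial coefficient `C(n, k)` with integer lower index, with the convention
`C(n, k) = 0` for `k < 0`, valued in `ℚ`. -/
def qchoose (n : ℕ) (k : ℤ) : ℚ := if k < 0 then 0 else (n.choose k.toNat : ℚ)

/-!
Write `X = C(2j+i-3, i-2)` and `Y = C(2i+j-3, j-2)`. Every binomial coefficient in the identity
is a rational multiple of `X` or of `Y`: lowering the index gives
`2j · C(2j+i-3, i-3) = (i-2) X`, and raising both entries gives
`(i-1) · C(2j+i-2, i-1) = (2j+i-2) X`, and symmetrically for `Y`. After these substitutions both
sides are `X Y` times the same rational function of `i` and `j`.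
-/

theorem qchoose_natCast (n k : ℕ) : qchoose n k = n.choose k := by
  simp [qchoose]

theorem qchoose_of_neg {n : ℕ} {k : ℤ} (hk : k < 0) : qchoose n k = 0 := by
  simp [qchoose, hk]

theorem qchoose_sub_one_mul (n : ℕ) (k : ℤ) :
    qchoose n (k - 1) * (n - k + 1) = qchoose n k * k := by
  obtain ⟨m, rfl | rfl⟩ := Int.eq_nat_or_neg k
  · rcases m with _ | m
    · simp [qchoose_of_neg]
    · rw [show ((m + 1 : ℕ) : ℤ) - 1 = m by push_cast; ring, qchoose_natCast, qchoose_natCast]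
      have h := Nat.choose_succ_right_eq n m
      rcases le_or_gt m n with hmn | hnm
      · rw [← Nat.cast_inj (R := ℚ)] at h
        push_cast [hmn] at h ⊢
        linarith
      · simp [Nat.choose_eq_zero_of_lt hnm, Nat.choose_eq_zero_of_lt (Nat.lt_succ_of_lt hnm)]
  · rcases m with _ | m
    · simp [qchoose_of_neg]
    · rw [qchoose_of_neg (by omega), qchoose_of_neg (by omega)]
      ring

theorem qchoose_succ_succ_mul (n : ℕ) (k : ℤ) :
    qchoose (n + 1) (k + 1) * (k + 1) = (n + 1) * qchoose n k := by
  rcases lt_trichotomy k (-1) with hk | rfl | hk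
  · rw [qchoose_of_neg (by omega : k + 1 < 0), qchoose_of_neg (by omega : k < 0)]
    ring
  · norm_num [qchoose_of_neg]
  · lift k to ℕ using (by omega)
    rw [show (k : ℤ) + 1 = ((k + 1 : ℕ) : ℤ) by push_cast; ring, qchoose_natCast, qchoose_natCast]
    exact_mod_cast (Nat.add_one_mul_choose_eq n k).symm

theorem qchoose_lower_index (i j : ℕ) (h : 3 ≤ 2 * j + i) :
    2 * (j : ℚ) * qchoose (2 * j + i - 3) ((i : ℤ) - 3)
      = ((i : ℚ) - 2) * qchoose (2 * j + i - 3) ((i : ℤ) - 2) := by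
  have key := qchoose_sub_one_mul (2 * j + i - 3) ((i : ℤ) - 2)
  rw [show (i : ℤ) - 2 - 1 = (i : ℤ) - 3 by ring] at key
  push_cast [Nat.cast_sub h] at key
  linarith

theorem qchoose_raise_both (i j : ℕ) (h : 3 ≤ 2 * j + i) :
    ((i : ℚ) - 1) * qchoose (2 * j + i - 2) ((i : ℤ) - 1)
      = (2 * (j : ℚ) + i - 2) * qchoose (2 * j + i - 3) ((i : ℤ) - 2) := by
  have key := qchoose_succ_succ_mul (2 * j + i - 3) ((i : ℤ) - 2)
  rw [show 2 * j + i - 3 + 1 = 2 * j + i - 2 by omega,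
    show (i : ℤ) - 2 + 1 = (i : ℤ) - 1 by ring] at key
  push_cast [Nat.cast_sub h] at key
  linarith

theorem collapse_of_ratios {i j X Y X' Y' Z W : ℚ} (hi : i ≠ 0) (hj : j ≠ 0)
    (hi₁ : i - 1 ≠ 0) (hj₁ : j - 1 ≠ 0)
    (hX' : 2 * j * X' = (i - 2) * X) (hY' : 2 * i * Y' = (j - 2) * Y)
    (hZ : (i - 1) * Z = (2 * j + i - 2) * X) (hW : (j - 1) * W = (2 * i + j - 2) * Y) :
    1 / ((i - 1) * (j - 1)) *
        (2 * (i + j - 2) * X * Y - 4 * (i + j - 1) * X' * Y' - 2 * j * X' * Y - 2 * i * X * Y')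
      = 1 / (i * j) * Z * W := by
  rw [show X' = (i - 2) * X / (2 * j) by field_simp; linarith,
    show Y' = (j - 2) * Y / (2 * i) by field_simp; linarith,
    show Z = (2 * j + i - 2) * X / (i - 1) by field_simp; linarith,
    show W = (2 * i + j - 2) * Y / (j - 1) by field_simp; linarith]
  field_simp
  ring

/-- Final step of the bivariate Lagrange inversion computation for fighting fish: the four
binomial terms collapse into the closed product formula, for all integers `i, j ≥ 2`. -/
theorem lagrange_collapse (i j : ℕ) (hi : 2 ≤ i) (hj : 2 ≤ j) :
    (1 / (((i : ℚ) - 1) * ((j : ℚ) - 1))) *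
      (2 * ((i : ℚ) + (j : ℚ) - 2) *
          qchoose (2*j + i - 3) ((i : ℤ) - 2) * qchoose (2*i + j - 3) ((j : ℤ) - 2)
        - 4 * ((i : ℚ) + (j : ℚ) - 1) *
          qchoose (2*j + i - 3) ((i : ℤ) - 3) * qchoose (2*i + j - 3) ((j : ℤ) - 3)
        - 2 * (j : ℚ) *
          qchoose (2*j + i - 3) ((i : ℤ) - 3) * qchoose (2*i + j - 3) ((j : ℤ) - 2)
        - 2 * (i : ℚ) *
          qchoose (2*j + i - 3) ((i : ℤ) - 2) * qchoose (2*i + j - 3) ((j : ℤ) - 3))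
      = (1 / ((i : ℚ) * (j : ℚ))) *
          qchoose (2*j + i - 2) ((i : ℤ) - 1) * qchoose (2*i + j - 2) ((j : ℤ) - 1) := by
  have hi' : (2 : ℚ) ≤ i := by exact_mod_cast hi
  have hj' : (2 : ℚ) ≤ j := by exact_mod_cast hj
  exact collapse_of_ratios (by positivity) (by positivity) (by linarith) (by linarith)
    (qchoose_lower_index i j (by omega)) (qchoose_lower_index j i (by omega))
    (qchoose_raise_both i j (by omega)) (qchoose_raise_both j i (by omega))
end
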